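/- arXiv:1411.3797 — 5 statements merged into one kernel-verified Lean document; each statement's English description precedes it below -/
import Mathlib

section
/- The function a ↦ a₄ is an invariant of the adjoint action of the KdV symmetry group: for every a = (a₁,a₂,a₃,a₄) ∈ ℝ⁴ and all real ε₁,ε₂,ε₃,ε₄, writing ã = a·A(ε₁,ε₂,ε₃,ε₄), one has ã₄ = a₄. Moreover, if a₄ = 0 then the quantity a₂²a₃³ is also invariant: ã₂²·ã₃³ = a₂²·a₃³. -/
open Real Matrix

/-- separate adjoint action matrix of v₁ -/
noncomputable def A1 (e : ℝ) : Matrix (Fin 4) (Fin 4) ℝ :=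
  !![1, 0, 0, 0;
     0, 1, 0, 0;
     0, 0, 1, 0;
     -e, 0, 0, 1]

/-- separate adjoint action matrix of v₂ -/
noncomputable def A2 (e : ℝ) : Matrix (Fin 4) (Fin 4) ℝ :=
  !![1, 0, 0, 0;
     0, 1, 0, 0;
     -e, 0, 1, 0;
     0, -3 * e, 0, 1]

/-- separate adjoint action matrix of v₃ -/
noncomputable def A3 (e : ℝ) : Matrix (Fin 4) (Fin 4) ℝ :=
  !![1, 0, 0, 0;
     e, 1, 0, 0;
     0, 0, 1, 0;
     0, 0, 2 * e, 1]

/-- separate adjoint action matrix of v₄ -/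
noncomputable def A4 (e : ℝ) : Matrix (Fin 4) (Fin 4) ℝ :=
  !![exp e, 0, 0, 0;
     0, exp (3 * e), 0, 0;
     0, 0, exp (-2 * e), 0;
     0, 0, 0, 1]

/-- the general adjoint transformation matrix of the KdV symmetry algebra -/
noncomputable def A (e1 e2 e3 e4 : ℝ) : Matrix (Fin 4) (Fin 4) ℝ :=
  A1 e1 * A2 e2 * A3 e3 * A4 e4

lemma vecMul_A1 (a : Fin 4 → ℝ) (e : ℝ) :
    Matrix.vecMul a (A1 e) = ![a 0 - e * a 3, a 1, a 2, a 3] := by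
  funext i
  fin_cases i <;>
    simp [A1, Matrix.vecMul, dotProduct, Fin.sum_univ_four, Matrix.vecHead, Matrix.vecTail, Function.comp] <;> ring

lemma vecMul_A2 (a : Fin 4 → ℝ) (e : ℝ) :
    Matrix.vecMul a (A2 e) = ![a 0 - e * a 2, a 1 - 3 * e * a 3, a 2, a 3] := by
  funext i
  fin_cases i <;>
    simp [A2, Matrix.vecMul, dotProduct, Fin.sum_univ_four, Matrix.vecHead, Matrix.vecTail, Function.comp] <;> ring

lemma vecMul_A3 (a : Fin 4 → ℝ) (e : ℝ) :
    Matrix.vecMul a (A3 e) = ![a 0 + e * a 1, a 1, a 2 + 2 * e * a 3, a 3] := by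
  funext i
  fin_cases i <;>
    simp [A3, Matrix.vecMul, dotProduct, Fin.sum_univ_four, Matrix.vecHead, Matrix.vecTail, Function.comp] <;> ring

lemma vecMul_A4 (a : Fin 4 → ℝ) (e : ℝ) :
    Matrix.vecMul a (A4 e) =
      ![exp e * a 0, exp (3 * e) * a 1, exp (-2 * e) * a 2, a 3] := by
  funext i
  fin_cases i <;>
    simp [A4, Matrix.vecMul, dotProduct, Fin.sum_univ_four, Matrix.vecHead, Matrix.vecTail, Function.comp] <;> ring

theorem kdv_invariants (a : Fin 4 → ℝ) (e1 e2 e3 e4 : ℝ) :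
    Matrix.vecMul a (A e1 e2 e3 e4) 3 = a 3 ∧
    (a 3 = 0 →
      (Matrix.vecMul a (A e1 e2 e3 e4) 1) ^ 2 *
        (Matrix.vecMul a (A e1 e2 e3 e4) 2) ^ 3 = (a 1) ^ 2 * (a 2) ^ 3) := by
  have h2 : exp (3 * e4) ^ 2 * exp (-2 * e4) ^ 3 = 1 := by
    rw [← Real.exp_nat_mul, ← Real.exp_nat_mul, ← Real.exp_add, ← Real.exp_zero]
    ring_nf
  have key : Matrix.vecMul a (A e1 e2 e3 e4) =
      Matrix.vecMul (Matrix.vecMul (Matrix.vecMul (Matrix.vecMul a (A1 e1)) (A2 e2)) (A3 e3)) (A4 e4) := by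
    simp [A, Matrix.vecMul_vecMul, Matrix.mul_assoc]
  rw [key, vecMul_A1, vecMul_A2, vecMul_A3, vecMul_A4]
  simp only [Matrix.cons_val_zero, Matrix.cons_val_one, Matrix.head_cons,
    Matrix.cons_val_two, Matrix.cons_val_three, Matrix.tail_cons]
  refine ⟨by trivial, fun h => ?_⟩
  rw [h]
  linear_combination a 1 ^ 2 * a 2 ^ 3 * h2
end

section
/- Any element of the KdV symmetry algebra with a₄ = 0, a₂ > 0 and a₂²a₃³ = 1 is adjoint-equivalent to v₂ + v₃: for all real a₁, a₂, a₃ with a₂ > 0 and a₂²a₃³ = 1, there exist real ε₁, ε₂, ε₃, ε₄ such that (a₁, a₂, a₃, 0)·A(ε₁, ε₂, ε₃, ε₄) = (0, 1, 1, 0). -/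
open Real Matrix

theorem kdv_case_a4_eq_zero_a2_pos (a1 a2 a3 : ℝ) (ha2 : 0 < a2)
    (hinv : a2 ^ 2 * a3 ^ 3 = 1) :
    ∃ e1 e2 e3 e4 : ℝ,
      Matrix.vecMul ![a1, a2, a3, 0] (A e1 e2 e3 e4) = ![0, 1, 1, 0] := by
  have ha3 : 0 < a3 := by nlinarith [sq_nonneg (a2 * a3)]
  obtain ⟨s, hs, hs3, hs2⟩ : ∃ s : ℝ, 0 < s ∧ s ^ 3 = a2⁻¹ ∧ s ^ 2 = a3 := by
    refine ⟨a2 ^ (-(1/3) : ℝ), Real.rpow_pos_of_pos ha2 _, ?_, ?_⟩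
    · rw [← Real.rpow_natCast (a2 ^ (-(1/3):ℝ)) 3, ← Real.rpow_mul ha2.le]
      norm_num [Real.rpow_neg_one]
    · have hcube : ((a2 ^ (-(1/3):ℝ)) ^ 2) ^ 3 = a3 ^ 3 := by
        have h1 : ((a2 ^ (-(1/3):ℝ)) ^ 2) ^ 3 = ((a2 ^ (-(1/3):ℝ)) ^ (3:ℕ)) ^ 2 := by ring
        rw [h1, ← Real.rpow_natCast (a2 ^ (-(1/3):ℝ)) 3, ← Real.rpow_mul ha2.le]
        norm_num [Real.rpow_neg_one]
        field_simp
        nlinarith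
      exact (Odd.strictMono_pow (R := ℝ) (n := 3) ⟨1, by norm_num⟩).injective hcube
  refine ⟨0, 0, -a1 / a2, Real.log s, ?_⟩
  have he : Real.exp (Real.log s) = s := Real.exp_log hs
  have h31 : Real.exp (3 * Real.log s) = s ^ 3 := by
    rw [show (3:ℝ) * Real.log s = Real.log s + Real.log s + Real.log s from by ring,
      Real.exp_add, Real.exp_add, he]; ring
  have h21 : Real.exp (-2 * Real.log s) = (s ^ 2)⁻¹ := by
    rw [show (-2:ℝ) * Real.log s = -(Real.log s + Real.log s) from by ring,
      Real.exp_neg, Real.exp_add, he]; rw [sq]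
  have h21' : Real.exp (-(2 * Real.log s)) = (s ^ 2)⁻¹ := by
    rw [← h21]; ring_nf
  funext i
  fin_cases i <;>
    simp [A, A1, A2, A3, A4, Matrix.vecMul, Matrix.mul_apply, Fin.sum_univ_succ,
      dotProduct, h31, h21, h21', he, hs3]
  · field_simp; ring
  · field_simp
  · rw [← hs2]; field_simp
end

section
/- Any element a₁v₁ + a₃v₃ of the KdV symmetry algebra with a₃ > 0 is adjoint-equivalent to v₃: for all real a₁ and a₃ > 0 there exist real ε₁, ε₂, ε₃, ε₄ such that (a₁, 0, a₃, 0)·A(ε₁, ε₂, ε₃, ε₄) = (0, 0, 1, 0). -/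
open Real Matrix

theorem A1_zero : A1 0 = 1 := by
  ext i j
  fin_cases i <;> fin_cases j <;> simp [A1]

theorem A3_zero : A3 0 = 1 := by
  ext i j
  fin_cases i <;> fin_cases j <;> simp [A3]

theorem vecMul_A2_s6 (a1 a2 a3 a4 e : ℝ) :
    vecMul ![a1, a2, a3, a4] (A2 e) = ![a1 - e * a3, a2 - 3 * e * a4, a3, a4] := by
  ext j
  fin_cases j <;> simp [A2, vecMul, dotProduct, Fin.sum_univ_four] <;> ring

theorem vecMul_A4_s6 (a1 a2 a3 a4 e : ℝ) :
    vecMul ![a1, a2, a3, a4] (A4 e) =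
      ![exp e * a1, exp (3 * e) * a2, exp (-2 * e) * a3, a4] := by
  ext j
  fin_cases j <;> simp [A4, vecMul, dotProduct, Fin.sum_univ_four, mul_comm]

theorem A_zero_eq_A2_mul_A4 (e2 e4 : ℝ) : A 0 e2 0 e4 = A2 e2 * A4 e4 := by
  rw [A, A1_zero, A3_zero, one_mul, mul_one]

theorem kdv_case_a3_pos (a1 a3 : ℝ) (ha3 : 0 < a3) :
    ∃ e1 e2 e3 e4 : ℝ,
      Matrix.vecMul ![a1, 0, a3, 0] (A e1 e2 e3 e4) = ![0, 0, 1, 0] := by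
  -- the flow of v₂ for time a1 / a3 removes the v₁-component, that of v₄ for time (log a3) / 2 rescales a3 to 1
  refine ⟨0, a1 / a3, 0, log a3 / 2, ?_⟩
  have hscale : exp (-2 * (log a3 / 2)) * a3 = 1 := by
    rw [show -2 * (log a3 / 2) = -log a3 by ring, exp_neg, exp_log ha3, inv_mul_cancel₀ ha3.ne']
  have hshift : a1 - a1 / a3 * a3 = 0 := by
    rw [div_mul_cancel₀ a1 ha3.ne', sub_self]
  rw [A_zero_eq_A2_mul_A4, ← vecMul_vecMul, vecMul_A2_s6, vecMul_A4_s6, hscale, hshift]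
  simp
end

section
/- Completeness of the one-dimensional optimal system of the KdV equation: for every nonzero a = (a₁,a₂,a₃,a₄) ∈ ℝ⁴ there exist real ε₁, ε₂, ε₃, ε₄ and a nonzero real constant c such that c·(a·A(ε₁,ε₂,ε₃,ε₄)) is one of the six vectors (0,0,0,1), (0,1,1,0), (0,−1,1,0), (0,0,1,0), (0,1,0,0), (1,0,0,0), i.e. every one-dimensional subalgebra is equivalent (under the adjoint action combined with scaling) to one spanned by v₄, v₃+v₂, v₃−v₂, v₃, v₂, or v₁. -/
open Real Matrix

/-!
The closed form of `a ↦ a · A(ε)` is triangular and leaves `a₄` invariant. If `a₄ ≠ 0`, the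
translations `ε₂, ε₃, ε₁` kill `a₂, a₃, a₁` in turn. If `a₄ = 0 ≠ a₃`, the parameter `ε₂` kills
`a₁`, and after rescaling only the ratio `a₂ e^{5ε₄} / a₃` is left, whose sign `ε₄` cannot change.
The remaining cases are immediate. (Coordinates are 1-based here, 0-based in the code.)
-/

lemma vecMul_A (a : Fin 4 → ℝ) (e1 e2 e3 e4 : ℝ) :
    vecMul a (A e1 e2 e3 e4) =
      ![(a 0 - e1 * a 3 - e2 * a 2 + e3 * (a 1 - 3 * e2 * a 3)) * exp e4,
        (a 1 - 3 * e2 * a 3) * exp (3 * e4),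
        (a 2 + 2 * e3 * a 3) * exp (-2 * e4),
        a 3] := by
  ext i
  fin_cases i <;>
    simp [A, A1, A2, A3, A4, vecMul, dotProduct, mul_apply, Fin.sum_univ_four] <;> ring

def KdVEquivalent (a b : Fin 4 → ℝ) : Prop :=
  ∃ e1 e2 e3 e4 c : ℝ, c ≠ 0 ∧ c • vecMul a (A e1 e2 e3 e4) = b

section Representatives

variable {a : Fin 4 → ℝ}

lemma kdvEquivalent_v4 (h3 : a 3 ≠ 0) : KdVEquivalent a ![0, 0, 0, 1] := by
  refine ⟨(a 0 - a 1 * a 2 / (3 * a 3)) / a 3, a 1 / (3 * a 3), -a 2 / (2 * a 3), 0, (a 3)⁻¹,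
    inv_ne_zero h3, ?_⟩
  rw [vecMul_A]
  ext i
  fin_cases i <;> simp [h3] <;> field_simp <;> ring

lemma kdvEquivalent_v3_add_smul_v2 (h3 : a 3 = 0) (h2 : a 2 ≠ 0) (e4 : ℝ) :
    KdVEquivalent a ![0, a 1 / a 2 * exp (5 * e4), 1, 0] := by
  refine ⟨0, a 0 / a 2, 0, e4, exp (2 * e4) / a 2, div_ne_zero (exp_ne_zero _) h2, ?_⟩
  have h5 : exp (2 * e4) * exp (3 * e4) = exp (5 * e4) := by rw [← exp_add]; ring_nf
  have h0 : exp (2 * e4) * exp (-2 * e4) = 1 := by rw [← exp_add]; simp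
  rw [vecMul_A]
  ext i
  fin_cases i <;> simp [h3, h2]
  · rw [← h5]; field_simp
  · rw [← h0]; field_simp

lemma kdvEquivalent_v3_add_sign_v2 (h3 : a 3 = 0) (h2 : a 2 ≠ 0) (h1 : a 1 ≠ 0) :
    KdVEquivalent a ![0, 1, 1, 0] ∨ KdVEquivalent a ![0, -1, 1, 0] := by
  have hr : a 1 / a 2 ≠ 0 := div_ne_zero h1 h2
  have equiv := kdvEquivalent_v3_add_smul_v2 h3 h2 (log |a 1 / a 2|⁻¹ / 5)
  rw [show 5 * (log |a 1 / a 2|⁻¹ / 5) = log |a 1 / a 2|⁻¹ by ring,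
    exp_log (by positivity)] at equiv
  rcases hr.lt_or_gt with hneg | hpos
  · rw [abs_of_neg hneg, inv_neg, mul_neg, mul_inv_cancel₀ hr] at equiv
    exact Or.inr equiv
  · rw [abs_of_pos hpos, mul_inv_cancel₀ hr] at equiv
    exact Or.inl equiv

lemma kdvEquivalent_v2 (h3 : a 3 = 0) (h2 : a 2 = 0) (h1 : a 1 ≠ 0) :
    KdVEquivalent a ![0, 1, 0, 0] := by
  refine ⟨0, 0, -a 0 / a 1, 0, (a 1)⁻¹, inv_ne_zero h1, ?_⟩
  rw [vecMul_A]
  ext i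
  fin_cases i <;> simp [h3, h2, h1]

lemma kdvEquivalent_v1 (h3 : a 3 = 0) (h2 : a 2 = 0) (h1 : a 1 = 0) (h0 : a 0 ≠ 0) :
    KdVEquivalent a ![1, 0, 0, 0] := by
  refine ⟨0, 0, 0, 0, (a 0)⁻¹, inv_ne_zero h0, ?_⟩
  rw [vecMul_A]
  ext i
  fin_cases i <;> simp [h3, h2, h1, h0]

end Representatives

lemma exists_kdvEquivalent_representative {a : Fin 4 → ℝ} (ha : a ≠ 0) :
    ∃ b ∈ ({![0, 0, 0, 1], ![0, 1, 1, 0], ![0, -1, 1, 0], ![0, 0, 1, 0], ![0, 1, 0, 0],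
      ![1, 0, 0, 0]} : Set (Fin 4 → ℝ)), KdVEquivalent a b := by
  rcases ne_or_eq (a 3) 0 with h3 | h3
  · exact ⟨_, by simp, kdvEquivalent_v4 h3⟩
  rcases ne_or_eq (a 2) 0 with h2 | h2
  · rcases ne_or_eq (a 1) 0 with h1 | h1
    · rcases kdvEquivalent_v3_add_sign_v2 h3 h2 h1 with equiv | equiv
      · exact ⟨_, by simp, equiv⟩
      · exact ⟨_, by simp, equiv⟩
    · exact ⟨![0, 0, 1, 0], by simp, by simpa [h1] using kdvEquivalent_v3_add_smul_v2 h3 h2 0⟩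
  rcases ne_or_eq (a 1) 0 with h1 | h1
  · exact ⟨_, by simp, kdvEquivalent_v2 h3 h2 h1⟩
  have h0 : a 0 ≠ 0 := fun h0 => ha (by ext i; fin_cases i <;> assumption)
  exact ⟨_, by simp, kdvEquivalent_v1 h3 h2 h1 h0⟩

theorem kdv_optimal_system_completeness (a : Fin 4 → ℝ) (ha : a ≠ 0) :
    ∃ (e1 e2 e3 e4 c : ℝ), c ≠ 0 ∧
      (c • Matrix.vecMul a (A e1 e2 e3 e4) = ![0, 0, 0, 1] ∨
       c • Matrix.vecMul a (A e1 e2 e3 e4) = ![0, 1, 1, 0] ∨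
       c • Matrix.vecMul a (A e1 e2 e3 e4) = ![0, -1, 1, 0] ∨
       c • Matrix.vecMul a (A e1 e2 e3 e4) = ![0, 0, 1, 0] ∨
       c • Matrix.vecMul a (A e1 e2 e3 e4) = ![0, 1, 0, 0] ∨
       c • Matrix.vecMul a (A e1 e2 e3 e4) = ![1, 0, 0, 0]) := by
  obtain ⟨b, hb, e1, e2, e3, e4, c, hc, hab⟩ := exists_kdvEquivalent_representative ha
  refine ⟨e1, e2, e3, e4, c, hc, ?_⟩
  rw [hab]
  simpa using hb
end

section
/- Inequivalence of the one-dimensional optimal system of the KdV equation: the six vectors (0,0,0,1), (0,1,1,0), (0,−1,1,0), (0,0,1,0), (0,1,0,0), (1,0,0,0) in ℝ⁴ are pairwise inequivalent, i.e. for any two distinct vectors w, w' from this list there exist no real ε₁, ε₂, ε₃, ε₄ and nonzero real c with w·A(ε₁,ε₂,ε₃,ε₄) = c·w'. -/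
open Real Matrix

set_option maxHeartbeats 2000000 in
lemma A_eq (e1 e2 e3 e4 : ℝ) : A e1 e2 e3 e4 =
  !![exp e4, 0, 0, 0;
     e3 * exp e4, exp (3*e4), 0, 0;
     -e2 * exp e4, 0, exp (-2*e4), 0;
     (-e1 - 3*e2*e3) * exp e4, -3*e2 * exp (3*e4), 2*e3 * exp (-2*e4), 1] := by
  unfold A A1 A2 A3 A4
  ext i j
  fin_cases i <;> fin_cases j <;>
    simp [Matrix.mul_apply, Fin.sum_univ_four, Matrix.vecHead, Matrix.vecTail] <;> ring_nf

set_option maxHeartbeats 2000000 in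
theorem kdv_optimal_system_inequivalence :
    ∀ w w' : Fin 4 → ℝ,
      w ∈ ({![0, 0, 0, 1], ![0, 1, 1, 0], ![0, -1, 1, 0], ![0, 0, 1, 0],
             ![0, 1, 0, 0], ![1, 0, 0, 0]} : Set (Fin 4 → ℝ)) →
      w' ∈ ({![0, 0, 0, 1], ![0, 1, 1, 0], ![0, -1, 1, 0], ![0, 0, 1, 0],
             ![0, 1, 0, 0], ![1, 0, 0, 0]} : Set (Fin 4 → ℝ)) →
      w ≠ w' →
      ¬ ∃ (e1 e2 e3 e4 c : ℝ), c ≠ 0 ∧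
          Matrix.vecMul w (A e1 e2 e3 e4) = c • w' := by
  intro w w' hw hw' hne
  simp only [Set.mem_insert_iff, Set.mem_singleton_iff] at hw hw'
  rintro ⟨e1, e2, e3, e4, c, hc, h⟩
  rw [A_eq] at h
  have h0 := congrFun h 0
  have h1 := congrFun h 1
  have h2 := congrFun h 2
  have h3 := congrFun h 3
  rcases hw with rfl|rfl|rfl|rfl|rfl|rfl <;> rcases hw' with rfl|rfl|rfl|rfl|rfl|rfl <;>
    simp [Matrix.vecMul, dotProduct, Fin.sum_univ_four] at h0 h1 h2 h3 <;>
    first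
    | exact hne rfl
    | exact hc (by linarith)
    | nlinarith [exp_pos e4, exp_pos (3*e4), exp_pos (-2*e4), exp_pos (-(2*e4))]
end
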